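/- Fix n ≥ 1 and Δ ≥ 0, and consider the space of n×n real matrices with the Frobenius (Euclidean) norm. Let S_Δ = { X : 0 ≤ X[i,j] ≤ 1 for all i,j, and Σ_{i,j} X[i,j] ≤ Δ }, and let clip : ℝ → ℝ be clip(t) = min(max(t, 0), 1). For any real n×n matrix Z and any μ > 0 such that Σ_{i,j} clip(Z[i,j] − μ) = Δ, the matrix with entries clip(Z[i,j] − μ) belongs to S_Δ and is the unique minimizer over S_Δ of the Frobenius distance to Z; i.e., it is the Euclidean projection of Z onto S_Δ. -/
import Mathlib


/-- Entrywise clipping to `[0,1]`: `clip t = min (max t 0) 1`. -/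
def clip (t : ℝ) : ℝ := min (max t 0) 1

/-- The constraint set `S_Δ = { X ∈ [0,1]^{n×n} : Σ_{i,j} X[i,j] ≤ Δ }`. -/
def budgetSet (n : ℕ) (Δ : ℝ) : Set (Matrix (Fin n) (Fin n) ℝ) :=
  {X | (∀ i j, 0 ≤ X i j ∧ X i j ≤ 1) ∧ ∑ i, ∑ j, X i j ≤ Δ}

/-- Frobenius (Euclidean) distance between two real `n×n` matrices. -/
noncomputable def frobDist {n : ℕ} (X Y : Matrix (Fin n) (Fin n) ℝ) : ℝ :=
  Real.sqrt (∑ i, ∑ j, (X i j - Y i j) ^ 2)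

lemma clip_nonneg (t : ℝ) : 0 ≤ clip t := le_min (le_max_right _ _) zero_le_one

lemma clip_le_one (t : ℝ) : clip t ≤ 1 := min_le_right _ _

lemma clip_key (s x : ℝ) (hx0 : 0 ≤ x) (hx1 : x ≤ 1) :
    (s - clip s) * (x - clip s) ≤ 0 := by
  rcases le_total s 0 with h | h
  · have : clip s = 0 := by simp [clip, max_eq_right h, le_trans h zero_le_one]
    rw [this]; nlinarith
  · rcases le_total s 1 with h1 | h1
    · have : clip s = s := by simp [clip, max_eq_left h, h1]
      simp [this]
    · have : clip s = 1 := by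
        have : max s 0 = s := max_eq_left (le_trans zero_le_one h1)
        simp [clip, this, h1]
      rw [this]; nlinarith

/-- If `μ > 0` satisfies `Σ_{i,j} clip(Z[i,j] − μ) = Δ` (the budget
constraint is active), then the matrix with entries `clip(Z[i,j] − μ)` lies in `S_Δ`
and is the unique minimizer of the Frobenius distance to `Z` over `S_Δ`, i.e. the
Euclidean projection of `Z` onto `S_Δ`. -/
theorem stmt_6 (n : ℕ) (hn : 1 ≤ n) (Δ : ℝ) (hΔ : 0 ≤ Δ)
    (Z : Matrix (Fin n) (Fin n) ℝ) (μ : ℝ) (hμ : 0 < μ)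
    (hZ : ∑ i, ∑ j, clip (Z i j - μ) = Δ) :
    (Matrix.of fun i j => clip (Z i j - μ)) ∈ budgetSet n Δ ∧
      ∀ X ∈ budgetSet n Δ, X ≠ (Matrix.of fun i j => clip (Z i j - μ)) →
        frobDist (Matrix.of fun i j => clip (Z i j - μ)) Z < frobDist X Z := by
  set P : Matrix (Fin n) (Fin n) ℝ := Matrix.of fun i j => clip (Z i j - μ) with hP
  have hPdef : ∀ i j, P i j = clip (Z i j - μ) := fun i j => rfl
  constructor
  · exact ⟨fun i j => ⟨clip_nonneg _, clip_le_one _⟩, le_of_eq hZ⟩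
  · intro X hX hne
    obtain ⟨hXb, hXs⟩ := hX
    -- cross term: ∑ (Z - P)(X - P) ≤ 0
    have hcross : ∑ i, ∑ j, (Z i j - P i j) * (X i j - P i j) ≤ 0 := by
      have hsplit : ∀ i j, (Z i j - P i j) * (X i j - P i j)
          = (Z i j - μ - P i j) * (X i j - P i j) + μ * (X i j - P i j) := by
        intro i j; ring
      have h1 : ∑ i, ∑ j, (Z i j - μ - P i j) * (X i j - P i j) ≤ 0 := by
        apply Finset.sum_nonpos; intro i _
        apply Finset.sum_nonpos; intro j _
        exact clip_key (Z i j - μ) (X i j) (hXb i j).1 (hXb i j).2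
      have h2 : ∑ i, ∑ j, μ * (X i j - P i j) ≤ 0 := by
        have hsum : ∑ i, ∑ j, μ * (X i j - P i j)
            = μ * ((∑ i, ∑ j, X i j) - ∑ i, ∑ j, P i j) := by
          simp_rw [mul_sub, Finset.sum_sub_distrib, Finset.mul_sum]
        rw [hsum]
        have hPsum : (∑ i, ∑ j, P i j) = Δ := hZ
        rw [hPsum]
        exact mul_nonpos_of_nonneg_of_nonpos hμ.le (by linarith)
      calc ∑ i, ∑ j, (Z i j - P i j) * (X i j - P i j)
          = (∑ i, ∑ j, (Z i j - μ - P i j) * (X i j - P i j))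
            + ∑ i, ∑ j, μ * (X i j - P i j) := by
            simp_rw [hsplit, Finset.sum_add_distrib]
        _ ≤ 0 := by linarith
    have hsq : ∀ i j, (X i j - Z i j) ^ 2
        = (P i j - Z i j) ^ 2 + (X i j - P i j) ^ 2
          - 2 * ((Z i j - P i j) * (X i j - P i j)) := by
      intro i j; ring
    have hdiffpos : 0 < ∑ i, ∑ j, (X i j - P i j) ^ 2 := by
      have hex : ∃ i j, X i j ≠ P i j := by
        by_contra h
        push_neg at h
        exact hne (by ext i j; exact h i j)
      obtain ⟨i, j, hij⟩ := hex
      have h1 : 0 < (X i j - P i j) ^ 2 := by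
        have := sub_ne_zero.mpr hij
        positivity
      calc (0:ℝ) < (X i j - P i j) ^ 2 := h1
        _ ≤ ∑ j', (X i j' - P i j') ^ 2 :=
            Finset.single_le_sum (f := fun j' => (X i j' - P i j') ^ 2)
              (fun k _ => sq_nonneg _) (Finset.mem_univ j)
        _ ≤ ∑ i', ∑ j', (X i' j' - P i' j') ^ 2 :=
            Finset.single_le_sum (f := fun i' => ∑ j', (X i' j' - P i' j') ^ 2)
              (fun k _ => Finset.sum_nonneg fun _ _ => sq_nonneg _) (Finset.mem_univ i)
    have hlt : ∑ i, ∑ j, (P i j - Z i j) ^ 2 < ∑ i, ∑ j, (X i j - Z i j) ^ 2 := by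
      have : ∑ i, ∑ j, (X i j - Z i j) ^ 2
          = (∑ i, ∑ j, (P i j - Z i j) ^ 2) + (∑ i, ∑ j, (X i j - P i j) ^ 2)
            - 2 * ∑ i, ∑ j, (Z i j - P i j) * (X i j - P i j) := by
        simp_rw [hsq, Finset.sum_sub_distrib, Finset.sum_add_distrib, Finset.mul_sum]
      linarith
    unfold frobDist
    exact Real.sqrt_lt_sqrt (Finset.sum_nonneg fun _ _ =>
      Finset.sum_nonneg fun _ _ => sq_nonneg _) hlt
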